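/- Assume cos(2nα)·(cos(2α) + sin(2α)) ≤ 1 (the large-α regime, so that λ_B ≥ 0). Then for each k ∈ {0,1}: (⟨0|⊗ₖI₂)·(M⊗ₖI₂)·C_X·(ψₖ⊗ₖI₂) = √λ_A · Uₖ, and (⟨1|⊗ₖI₂)·(M⊗ₖσz)·C_X·(ψₖ⊗ₖI₂) = (−1)^{k+1}·i·√λ_B · Uₖ (equalities of 2×2 complex matrices). (Proposition 3 of the paper: the quantum circuit with one CNOT, the isometry M and a qutrit measurement performs optimal perfect probabilistic retrieval of the two qubit unitaries.) -/

import Mathlib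

open Matrix Kronecker Complex Filter
open scoped ComplexOrder

noncomputable section

/-- Pauli `σx`. -/
def pX : Matrix (Fin 2) (Fin 2) ℂ := !![0, 1; 1, 0]

/-- Pauli `σz`. -/
def pZ : Matrix (Fin 2) (Fin 2) ℂ := !![1, 0; 0, -1]

/-- `|+⟩ = (1,1)/√2`. -/
def plusV : Fin 2 → ℂ := ((Real.sqrt 2 : ℂ))⁻¹ • ![1, 1]

/-- `|−⟩ = (1,−1)/√2`. -/
def minusV : Fin 2 → ℂ := ((Real.sqrt 2 : ℂ))⁻¹ • ![1, -1]

/-- The memory states `ψ₀ = (e^{inα}, e^{-inα})/√2`, `ψ₁ = (e^{-inα}, e^{inα})/√2`. -/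
def psiMem (n : ℕ) (α : ℝ) (k : Fin 2) : Fin 2 → ℂ :=
  if k = 0 then
    ((Real.sqrt 2 : ℂ))⁻¹ • ![Complex.exp (Complex.I * n * α), Complex.exp (-(Complex.I * n * α))]
  else
    ((Real.sqrt 2 : ℂ))⁻¹ • ![Complex.exp (-(Complex.I * n * α)), Complex.exp (Complex.I * n * α)]

/-- The two unitaries `U₀ = diag(e^{iα}, e^{-iα})`, `U₁ = diag(e^{-iα}, e^{iα})`. -/
def Umat (α : ℝ) (k : Fin 2) : Matrix (Fin 2) (Fin 2) ℂ :=
  if k = 0 then !![Complex.exp (Complex.I * α), 0; 0, Complex.exp (-(Complex.I * α))]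
  else !![Complex.exp (-(Complex.I * α)), 0; 0, Complex.exp (Complex.I * α)]

/-- CNOT with second factor as control and first factor as target. -/
def CX : Matrix (Fin 2 × Fin 2) (Fin 2 × Fin 2) ℂ :=
  (1 : Matrix (Fin 2) (Fin 2) ℂ) ⊗ₖ !![(1 : ℂ), 0; 0, 0] + pX ⊗ₖ !![(0 : ℂ), 0; 0, 1]

/-- `ψ ⊗ₖ I₂` : the 4×2 matrix tensoring a column vector with the identity. -/
def ketI (ψ : Fin 2 → ℂ) : Matrix (Fin 2 × Fin 2) (Fin 2) ℂ :=
  Matrix.of fun p b => ψ p.1 * (if p.2 = b then 1 else 0)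

/-- `⟨j| ⊗ₖ I₂` : the 2×6 matrix contracting the qutrit factor with `|j⟩`. -/
def braI (j : Fin 3) : Matrix (Fin 2) (Fin 3 × Fin 2) ℂ :=
  Matrix.of fun b p => if p.1 = j ∧ p.2 = b then 1 else 0

/-- `λ_A = (1 + c̃ₙ(c̃ − s̃))/2`. -/
def lamA (n : ℕ) (α : ℝ) : ℝ :=
  (1 + Real.cos (2 * n * α) * (Real.cos (2 * α) - Real.sin (2 * α))) / 2

/-- `λ_B = (1 − c̃ₙ(c̃ + s̃))/2`. -/
def lamB (n : ℕ) (α : ℝ) : ℝ :=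
  (1 - Real.cos (2 * n * α) * (Real.cos (2 * α) + Real.sin (2 * α))) / 2

/-- `ν₊ = c̃ₙ(1 − c̃² + s̃)/(1 + c̃ₙ)`. -/
def nuP (n : ℕ) (α : ℝ) : ℝ :=
  Real.cos (2 * n * α) * (1 - Real.cos (2 * α) ^ 2 + Real.sin (2 * α)) / (1 + Real.cos (2 * n * α))

/-- `ν₋ = c̃ₙ(c̃² − 1 + s̃)/(1 − c̃ₙ)`. -/
def nuM (n : ℕ) (α : ℝ) : ℝ :=
  Real.cos (2 * n * α) * (Real.cos (2 * α) ^ 2 - 1 + Real.sin (2 * α)) / (1 - Real.cos (2 * n * α))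

/-- `a₁ = (√λ_A·c/cₙ, √λ_B·s/cₙ, √ν₊)`. -/
def aOne (n : ℕ) (α : ℝ) : Fin 3 → ℂ :=
  ![((Real.sqrt (lamA n α) * Real.cos α / Real.cos (n * α) : ℝ) : ℂ),
    ((Real.sqrt (lamB n α) * Real.sin α / Real.cos (n * α) : ℝ) : ℂ),
    ((Real.sqrt (nuP n α) : ℝ) : ℂ)]

/-- `a₂ = (√λ_A·s/sₙ, −√λ_B·c/sₙ, −√ν₋)`. -/
def aTwo (n : ℕ) (α : ℝ) : Fin 3 → ℂ :=
  ![((Real.sqrt (lamA n α) * Real.sin α / Real.sin (n * α) : ℝ) : ℂ),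
    ((-(Real.sqrt (lamB n α) * Real.cos α / Real.sin (n * α)) : ℝ) : ℂ),
    ((-Real.sqrt (nuM n α) : ℝ) : ℂ)]

/-- The qubit-to-qutrit isometry `M` with `M|+⟩ = a₁`, `M|−⟩ = a₂`. -/
def Mmat (n : ℕ) (α : ℝ) : Matrix (Fin 3) (Fin 2) ℂ :=
  Matrix.vecMulVec (aOne n α) (star plusV) + Matrix.vecMulVec (aTwo n α) (star minusV)

/-!
Feeding the input basis state `|b⟩` into the CNOT applies `σx^b` to the memory, so both
circuits output diagonal matrices whose entries are rows `0` and `1` of `M` applied to `ψₖ` and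
`σx ψₖ`. Since `⟨+|ψₖ⟩ = cₙ` and `⟨−|ψₖ⟩ = ±i sₙ`, with the sign flipped by `σx`, we get
`M ψ = cₙ a₁ ± i sₙ a₂`; the denominators `cₙ`, `sₙ` in `a₁`, `a₂` cancel these coefficients,
leaving `√λ_A (c ± i s)` and `∓i √λ_B (c ± i s)`.
-/

theorem braI_mul_kronecker_mul_CX_mul_ketI (j : Fin 3) (A : Matrix (Fin 3) (Fin 2) ℂ)
    (d₀ d₁ : ℂ) (ψ : Fin 2 → ℂ) :
    braI j * (A ⊗ₖ !![d₀, 0; 0, d₁]) * CX * ketI ψ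
      = !![d₀ * (A *ᵥ ψ) j, 0; 0, d₁ * (A *ᵥ (pX *ᵥ ψ)) j] := by
  ext a b
  fin_cases a <;> fin_cases b <;>
    simp [braI, CX, ketI, pX, Matrix.mul_apply, Matrix.mulVec, dotProduct, Fintype.sum_prod_type,
      Fin.sum_univ_two] <;> ring

theorem exp_I_mul_ofReal (x : ℝ) : exp (I * x) = Real.cos x + I * Real.sin x := by
  rw [mul_comm, exp_mul_I, ← ofReal_cos, ← ofReal_sin, mul_comm I]

theorem exp_neg_I_mul_ofReal (x : ℝ) : exp (-(I * x)) = Real.cos x - I * Real.sin x := by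
  simpa [sub_eq_add_neg] using exp_I_mul_ofReal (-x)

theorem ofReal_sqrt_two_inv_mul_self :
    ((Real.sqrt 2 : ℂ))⁻¹ * ((Real.sqrt 2 : ℂ))⁻¹ = 1 / 2 := by
  rw [← mul_inv, ← ofReal_mul, Real.mul_self_sqrt zero_le_two]
  norm_num

theorem star_plusV_dotProduct (φ : Fin 2 → ℂ) :
    star plusV ⬝ᵥ φ = ((Real.sqrt 2 : ℂ))⁻¹ * (φ 0 + φ 1) := by
  simp [plusV, dotProduct, Fin.sum_univ_two, mul_add]

theorem star_minusV_dotProduct (φ : Fin 2 → ℂ) :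
    star minusV ⬝ᵥ φ = ((Real.sqrt 2 : ℂ))⁻¹ * (φ 0 - φ 1) := by
  simp [minusV, dotProduct, Fin.sum_univ_two, sub_eq_add_neg, mul_add]

theorem pX_mulVec (φ : Fin 2 → ℂ) : pX *ᵥ φ = ![φ 1, φ 0] := by
  ext i
  fin_cases i <;> simp [pX, mulVec, dotProduct]

theorem star_plusV_dotProduct_pX_mulVec (φ : Fin 2 → ℂ) :
    star plusV ⬝ᵥ (pX *ᵥ φ) = star plusV ⬝ᵥ φ := by
  rw [star_plusV_dotProduct, star_plusV_dotProduct, pX_mulVec, cons_val_zero, cons_val_one,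
    cons_val_fin_one, add_comm]

theorem star_minusV_dotProduct_pX_mulVec (φ : Fin 2 → ℂ) :
    star minusV ⬝ᵥ (pX *ᵥ φ) = -(star minusV ⬝ᵥ φ) := by
  rw [star_minusV_dotProduct, star_minusV_dotProduct, pX_mulVec, cons_val_zero, cons_val_one,
    cons_val_fin_one, ← mul_neg, neg_sub]

theorem psiMem_eq (n : ℕ) (α : ℝ) (k : Fin 2) :
    psiMem n α k = ((Real.sqrt 2 : ℂ))⁻¹ •
      ![Real.cos (n * α) + (-1) ^ (k : ℕ) * I * Real.sin (n * α),
        Real.cos (n * α) - (-1) ^ (k : ℕ) * I * Real.sin (n * α)] := by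
  have h : I * n * α = I * ((n * α : ℝ) : ℂ) := by push_cast; ring
  fin_cases k <;> simp only [psiMem, h, exp_I_mul_ofReal, exp_neg_I_mul_ofReal] <;>
    norm_num [sub_eq_add_neg]

theorem star_plusV_dotProduct_psiMem (n : ℕ) (α : ℝ) (k : Fin 2) :
    star plusV ⬝ᵥ psiMem n α k = Real.cos (n * α) := by
  simp only [star_plusV_dotProduct, psiMem_eq, Pi.smul_apply, cons_val_zero, cons_val_one,
    smul_eq_mul]
  linear_combination (2 * (Real.cos (n * α) : ℂ)) * ofReal_sqrt_two_inv_mul_self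

theorem star_minusV_dotProduct_psiMem (n : ℕ) (α : ℝ) (k : Fin 2) :
    star minusV ⬝ᵥ psiMem n α k = (-1) ^ (k : ℕ) * I * Real.sin (n * α) := by
  simp only [star_minusV_dotProduct, psiMem_eq, Pi.smul_apply, cons_val_zero, cons_val_one,
    smul_eq_mul]
  linear_combination (2 * (-1) ^ (k : ℕ) * I * (Real.sin (n * α) : ℂ)) *
    ofReal_sqrt_two_inv_mul_self

theorem Mmat_mulVec (n : ℕ) (α : ℝ) (φ : Fin 2 → ℂ) :
    Mmat n α *ᵥ φ = (star plusV ⬝ᵥ φ) • aOne n α + (star minusV ⬝ᵥ φ) • aTwo n α := by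
  simp only [Mmat, add_mulVec, vecMulVec_mulVec, op_smul_eq_smul]

section Rows

variable {n : ℕ} {α : ℝ} {φ : Fin 2 → ℂ} {ε : ℂ}

theorem Mmat_mulVec_apply_zero (hc : Real.cos (n * α) ≠ 0) (hs : Real.sin (n * α) ≠ 0)
    (hplus : star plusV ⬝ᵥ φ = Real.cos (n * α))
    (hminus : star minusV ⬝ᵥ φ = ε * I * Real.sin (n * α)) :
    (Mmat n α *ᵥ φ) 0 = Real.sqrt (lamA n α) * (Real.cos α + ε * I * Real.sin α) := by
  have hc' : (Real.cos (n * α) : ℂ) ≠ 0 := ofReal_ne_zero.mpr hc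
  have hs' : (Real.sin (n * α) : ℂ) ≠ 0 := ofReal_ne_zero.mpr hs
  rw [Mmat_mulVec, hplus, hminus]
  simp only [aOne, aTwo, Pi.add_apply, Pi.smul_apply, cons_val_zero, smul_eq_mul, ofReal_mul,
    ofReal_div]
  field_simp

theorem Mmat_mulVec_apply_one (hc : Real.cos (n * α) ≠ 0) (hs : Real.sin (n * α) ≠ 0)
    (hplus : star plusV ⬝ᵥ φ = Real.cos (n * α))
    (hminus : star minusV ⬝ᵥ φ = ε * I * Real.sin (n * α)) (hε : ε ^ 2 = 1) :
    (Mmat n α *ᵥ φ) 1 = -ε * I * Real.sqrt (lamB n α) * (Real.cos α + ε * I * Real.sin α) := by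
  have hc' : (Real.cos (n * α) : ℂ) ≠ 0 := ofReal_ne_zero.mpr hc
  have hs' : (Real.sin (n * α) : ℂ) ≠ 0 := ofReal_ne_zero.mpr hs
  rw [Mmat_mulVec, hplus, hminus]
  simp only [aOne, aTwo, Pi.add_apply, Pi.smul_apply, cons_val_one, cons_val_zero,
    smul_eq_mul, ofReal_mul, ofReal_div, ofReal_neg]
  field_simp
  linear_combination (ε ^ 2 * Real.sqrt (lamB n α) * Real.sin α : ℂ) * I_sq
    - (Real.sqrt (lamB n α) * Real.sin α : ℂ) * hε

end Rows

theorem Umat_eq (α : ℝ) (k : Fin 2) :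
    Umat α k = !![Real.cos α + (-1) ^ (k : ℕ) * I * Real.sin α, 0;
      0, Real.cos α - (-1) ^ (k : ℕ) * I * Real.sin α] := by
  fin_cases k <;> simp only [Umat, exp_I_mul_ofReal, exp_neg_I_mul_ofReal] <;>
    norm_num [sub_eq_add_neg]

theorem circuit_retrieves_unitaries_large_alpha_general (n : ℕ) (hn : 1 ≤ n) (α : ℝ) (hα : 0 < α)
    (hdist : 4 * n * α < Real.pi) (k : Fin 2) :
    braI 0 * ((Mmat n α) ⊗ₖ (1 : Matrix (Fin 2) (Fin 2) ℂ)) * CX * ketI (psiMem n α k)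
      = ((Real.sqrt (lamA n α) : ℝ) : ℂ) • Umat α k ∧
    braI 1 * ((Mmat n α) ⊗ₖ pZ) * CX * ketI (psiMem n α k)
      = ((-1 : ℂ) ^ ((k : ℕ) + 1) * Complex.I * ((Real.sqrt (lamB n α) : ℝ) : ℂ)) • Umat α k := by
  have hnα : 0 < (n : ℝ) * α := mul_pos (Nat.cast_pos.mpr hn) hα
  have hc : Real.cos (n * α) ≠ 0 :=
    (Real.cos_pos_of_mem_Ioo ⟨by linarith, by nlinarith [Real.pi_pos]⟩).ne'
  have hs : Real.sin (n * α) ≠ 0 :=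
    (Real.sin_pos_of_pos_of_lt_pi hnα (by nlinarith [Real.pi_pos])).ne'
  have hplus := star_plusV_dotProduct_psiMem n α k
  have hminus := star_minusV_dotProduct_psiMem n α k
  have hplus' : star plusV ⬝ᵥ (pX *ᵥ psiMem n α k) = Real.cos (n * α) := by
    rw [star_plusV_dotProduct_pX_mulVec, hplus]
  have hminus' :
      star minusV ⬝ᵥ (pX *ᵥ psiMem n α k) = -(-1) ^ (k : ℕ) * I * Real.sin (n * α) := by
    rw [star_minusV_dotProduct_pX_mulVec, hminus]
    ring
  have hsign : ((-1 : ℂ) ^ (k : ℕ)) ^ 2 = 1 := by rw [← pow_mul, pow_mul', neg_one_sq, one_pow]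
  have hsign' : (-(-1 : ℂ) ^ (k : ℕ)) ^ 2 = 1 := by rw [neg_sq, hsign]
  constructor
  · rw [one_fin_two, braI_mul_kronecker_mul_CX_mul_ketI, Mmat_mulVec_apply_zero hc hs hplus hminus,
      Mmat_mulVec_apply_zero hc hs hplus' hminus', Umat_eq]
    simp only [smul_of, smul_cons, smul_eq_mul, smul_empty, mul_zero,
      EmbeddingLike.apply_eq_iff_eq, vecCons_inj, and_true, true_and]
    constructor <;> ring
  · rw [show pZ = !![1, 0; 0, -1] from rfl, braI_mul_kronecker_mul_CX_mul_ketI,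
      Mmat_mulVec_apply_one hc hs hplus hminus hsign,
      Mmat_mulVec_apply_one hc hs hplus' hminus' hsign', Umat_eq]
    simp only [smul_of, smul_cons, smul_eq_mul, smul_empty, mul_zero,
      EmbeddingLike.apply_eq_iff_eq, vecCons_inj, and_true, true_and]
    constructor <;> ring

theorem circuit_retrieves_unitaries_large_alpha (n : ℕ) (hn : 1 ≤ n) (α : ℝ) (hα : 0 < α)
    (hdist : 4 * n * α < Real.pi)
    (hreg : Real.cos (2 * n * α) * (Real.cos (2 * α) + Real.sin (2 * α)) ≤ 1) (k : Fin 2) :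
    braI 0 * ((Mmat n α) ⊗ₖ (1 : Matrix (Fin 2) (Fin 2) ℂ)) * CX * ketI (psiMem n α k)
      = ((Real.sqrt (lamA n α) : ℝ) : ℂ) • Umat α k ∧
    braI 1 * ((Mmat n α) ⊗ₖ pZ) * CX * ketI (psiMem n α k)
      = ((-1 : ℂ) ^ ((k : ℕ) + 1) * Complex.I * ((Real.sqrt (lamB n α) : ℝ) : ℂ)) • Umat α k :=
  circuit_retrieves_unitaries_large_alpha_general n hn α hα hdist k
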